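/- arXiv:1601.03226 — 7 statements merged into one kernel-verified Lean document; each statement's English description precedes it below -/
import Mathlib

section
/- Strong subadditivity for log-determinant of covariance matrices: Let n_A, n_B, n_C be positive integers, n = n_A + n_B + n_C, and let V be a 2n×2n real symmetric bona fide covariance matrix of a system of n modes partitioned into groups A, B, C of n_A, n_B, n_C modes respectively. Then log det V_{A∪B} + log det V_{B∪C} − log det V_A − log det V_C ≥ 0. -/
/-!
Since `J` is real, `V - iJ` is the entrywise complex conjugate of `V + iJ`, so it is positive
semidefinite as well, and as `J` is invertible `V` is positive definite. Let `M` and `N` be the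
Schur complements of `V_A` in `V_{AB}` and of `V_C` in `V_{CB}`; then `det V_{AB} = det V_A det M`
and `det V_{BC} = det V_C det N`, so it suffices to show `det M det N ≥ 1`.

On the modes `(A, C, B, B)`, the average of `V + iJ` and of `V - iJ` conjugated by the signs
`(+, -, +, -)` is positive semidefinite. As `J` vanishes between different modes, its Schur
complement with respect to `V_A ⊕ V_C` is `[[M, iJ_B], [iJ_B, N]]`. Hence
`N ≥ (iJ_B)ᴴ M⁻¹ (iJ_B)`, and monotonicity of the determinant on positive matrices gives
`det M det N ≥ |det (iJ_B)|² = 1`.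
-/

open Matrix
open scoped ComplexOrder

noncomputable section

/-- The 2×2 symplectic form σ = [[0,1],[-1,0]]. -/
def symp : Matrix (Fin 2) (Fin 2) ℝ := !![0, 1; -1, 0]

/-- The symplectic form on a system whose modes are indexed by `α`:
the direct sum of one copy of `σ` per mode. -/
def Jmat (α : Type*) [DecidableEq α] : Matrix (α × Fin 2) (α × Fin 2) ℝ :=
  fun p q => if p.1 = q.1 then symp p.2 q.2 else 0

/-- A real symmetric matrix `V` on phase space is a bona fide covariance matrix
if the complex Hermitian matrix `V + i J` is positive semidefinite. -/
def BonaFide {α : Type*} [Fintype α] [DecidableEq α]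
    (V : Matrix (α × Fin 2) (α × Fin 2) ℝ) : Prop :=
  ((V.map (Complex.ofReal)) + Complex.I • ((Jmat α).map (Complex.ofReal))).PosSemidef

namespace Matrix

lemma submatrix_sumElim_of_isHermitian {ι a b α : Type*} [Star α] {X : Matrix ι ι α}
    (hX : X.IsHermitian) (f : a → ι) (g : b → ι) :
    X.submatrix (Sum.elim f g) (Sum.elim f g) =
      fromBlocks (X.submatrix f f) (X.submatrix f g) (X.submatrix f g)ᴴ (X.submatrix g g) := by
  rw [conjTranspose_submatrix, hX.eq]
  ext (i | i) (j | j) <;> rfl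

lemma PosSemidef.map_star {n 𝕜 : Type*} [RCLike 𝕜] {A : Matrix n n 𝕜} (hA : A.PosSemidef) :
    (A.map star).PosSemidef := by
  have h := hA.conjTranspose.transpose
  rwa [Matrix.conjTranspose, transpose_map, transpose_transpose] at h

variable {m n 𝕜 : Type*} [Fintype m] [Fintype n] [DecidableEq m] [DecidableEq n] [RCLike 𝕜]

lemma det_submatrix_comp_equiv {ι R : Type*} [CommRing R] (A : Matrix ι ι R) (g : n → ι)
    (e : m ≃ n) : (A.submatrix (g ∘ e) (g ∘ e)).det = (A.submatrix g g).det := by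
  rw [← submatrix_submatrix, det_submatrix_equiv_self]

lemma posSemidef_ite_of_add_of_sub {A B : Matrix n n 𝕜} (hadd : (A + B).PosSemidef)
    (hsub : (A - B).PosSemidef) (s : n → Bool) :
    (of fun i j ↦ if s i = s j then A i j else B i j).PosSemidef := by
  -- Twice the matrix is `(A + B) + D (A - B) D` for the sign matrix `D = diagonal (±1)`.
  set D : Matrix n n 𝕜 := diagonal fun i ↦ if s i then 1 else -1
  have hD : Dᴴ = D := by
    rw [diagonal_conjTranspose]
    congr 1
    funext i
    cases hi : s i <;> simp [hi]
  have h := hadd.add (hsub.conjTranspose_mul_mul_same D)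
  rw [hD] at h
  convert h.smul (show (0 : 𝕜) ≤ 2⁻¹ by positivity) using 1
  ext i j
  cases hi : s i <;> cases hj : s j <;> simp [D, hi, hj] <;> ring

lemma posDef_of_add_of_sub {A B : Matrix n n 𝕜} (hadd : (A + B).PosSemidef)
    (hsub : (A - B).PosSemidef) (hB : IsUnit B) : A.PosDef := by
  have hA : A.PosSemidef := posSemidef_ite_of_add_of_sub hadd hsub fun _ ↦ true
  rw [hA.posDef_iff_det_ne_zero, Ne, ← exists_mulVec_eq_zero_iff]
  rintro ⟨x, hx, hAx⟩
  have hc : star x ⬝ᵥ (B *ᵥ x) = 0 := le_antisymm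
    (by simpa [sub_mulVec, hAx] using hsub.dotProduct_mulVec_nonneg x)
    (by simpa [add_mulVec, hAx] using hadd.dotProduct_mulVec_nonneg x)
  have hBx : B *ᵥ x = 0 := by
    simpa [add_mulVec, hAx] using
      (hadd.dotProduct_mulVec_zero_iff x).mp (by simp [add_mulVec, hAx, hc])
  exact hx (mulVec_injective_iff_isUnit.mpr hB (hBx.trans (mulVec_zero B).symm))

open scoped MatrixOrder in
lemma PosSemidef.det_le_one {X : Matrix n n 𝕜} (hX : X.PosSemidef) (h1X : (1 - X).PosSemidef) :
    X.det ≤ 1 := by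
  have heig (i : n) : hX.1.eigenvalues i ≤ 1 :=
    (CFC.le_one_iff X hX.1.isSelfAdjoint).mp h1X _ (hX.1.eigenvalues_mem_spectrum_real i)
  rw [hX.1.det_eq_prod_eigenvalues]
  exact_mod_cast Finset.prod_le_one (fun i _ ↦ hX.eigenvalues_nonneg i) fun i _ ↦ heig i

open scoped MatrixOrder in
lemma PosSemidef.det_le_det {A B : Matrix n n 𝕜} (hA : A.PosSemidef) (hB : B.PosDef)
    (hAB : (B - A).PosSemidef) : A.det ≤ B.det := by
  -- Conjugating by `S⁻¹ = B^(-1/2)` gives `0 ≤ S⁻¹ A S⁻¹ ≤ 1`.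
  set S := CFC.sqrt B
  have hSS : S * S = B := CFC.sqrt_mul_sqrt_self B hB.posSemidef.nonneg
  have hS : IsUnit S.det := by
    rw [← isUnit_mul_self_iff, ← det_mul, hSS]
    exact hB.det_pos.ne'.isUnit
  have hSinv : S⁻¹ᴴ = S⁻¹ := (CFC.sqrt_nonneg B).posSemidef.1.inv.eq
  have hX := hA.conjTranspose_mul_mul_same S⁻¹
  have h1X := hAB.conjTranspose_mul_mul_same S⁻¹
  rw [hSinv] at hX h1X
  rw [mul_sub, sub_mul, ← hSS, ← mul_assoc, nonsing_inv_mul _ hS, one_mul,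
    mul_nonsing_inv _ hS] at h1X
  calc A.det = (S⁻¹ * A * S⁻¹).det * B.det := by
        rw [← hSS, det_mul, det_mul, det_mul]
        linear_combination (-A.det * (S⁻¹.det * S.det + 1)) * det_nonsing_inv_mul_det _ hS
    _ ≤ 1 * B.det := mul_le_mul_of_nonneg_right (hX.det_le_one h1X) hB.det_pos.le
    _ = B.det := one_mul _

lemma PosDef.det_fromBlocks₁₁ {A : Matrix m m 𝕜} (hA : A.PosDef) (B : Matrix m n 𝕜)
    (C : Matrix n m 𝕜) (D : Matrix n n 𝕜) :
    (fromBlocks A B C D).det = A.det * (D - C * A⁻¹ * B).det := by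
  have := hA.isUnit.invertible
  rw [Matrix.det_fromBlocks₁₁, invOf_eq_nonsing_inv]

lemma PosDef.schur_complement₁₁ {A : Matrix m m 𝕜} {B : Matrix m n 𝕜} {D : Matrix n n 𝕜}
    (h : (fromBlocks A B Bᴴ D).PosDef) : (D - Bᴴ * A⁻¹ * B).PosDef := by
  have hA : A.PosDef := h.submatrix Sum.inl_injective
  have := hA.isUnit.invertible
  have hdet := h.det_pos.ne'
  rw [hA.det_fromBlocks₁₁] at hdet
  exact ((PosDef.fromBlocks₁₁ B D hA).mp h.posSemidef).posDef_iff_det_ne_zero.mpr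
    (right_ne_zero_of_mul hdet)

lemma PosSemidef.schur_complement_fromBlocks_zero {a b c d : Type*} [Fintype a] [Fintype b]
    [Fintype c] [Fintype d] [DecidableEq a] [DecidableEq b] [DecidableEq c] [DecidableEq d]
    {A : Matrix a a 𝕜} {C : Matrix c c 𝕜} {B : Matrix a b 𝕜} {D : Matrix c d 𝕜}
    {F : Matrix (b ⊕ d) (b ⊕ d) 𝕜} (hA : A.PosDef) (hC : C.PosDef)
    (h : (fromBlocks (fromBlocks A 0 0 C) (fromBlocks B 0 0 D) (fromBlocks B 0 0 D)ᴴ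
      F).PosSemidef) :
    (F - fromBlocks (Bᴴ * A⁻¹ * B) 0 0 (Dᴴ * C⁻¹ * D)).PosSemidef := by
  have hAC : (fromBlocks A 0 0 C).PosDef := by
    have := hA.isUnit.invertible
    have h0 := (PosDef.fromBlocks₁₁ 0 C hA).mpr (by simpa using hC.posSemidef)
    rw [conjTranspose_zero] at h0
    refine h0.posDef_iff_det_ne_zero.mpr ?_
    rw [hA.det_fromBlocks₁₁]
    simpa using ⟨hA.det_pos.ne', hC.det_pos.ne'⟩
  have := hAC.isUnit.invertible
  have hinv : (fromBlocks A 0 0 C)⁻¹ = fromBlocks A⁻¹ 0 0 C⁻¹ := by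
    rw [inv_fromBlocks_zero₁₂_of_isUnit_iff _ _ _ (iff_of_true hA.isUnit hC.isUnit)]
    simp
  have hS := (PosDef.fromBlocks₁₁ _ F hAC).mp h
  rw [hinv, fromBlocks_conjTranspose, fromBlocks_multiply, fromBlocks_multiply] at hS
  simpa using hS

lemma PosSemidef.det_conjTranspose_mul_det_le {M N K : Matrix n n 𝕜}
    (h : (fromBlocks M K Kᴴ N).PosSemidef) (hM : M.PosDef) (hN : N.PosDef) :
    Kᴴ.det * K.det ≤ M.det * N.det := by
  have := hM.isUnit.invertible
  have hle := (hM.posSemidef.inv.conjTranspose_mul_mul_same K).det_le_det hN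
    ((PosDef.fromBlocks₁₁ K N hM).mp h)
  rw [det_mul, det_mul, det_nonsing_inv, Ring.inverse_eq_inv'] at hle
  calc Kᴴ.det * K.det = M.det * (Kᴴ.det * M.det⁻¹ * K.det) := by
        field_simp [hM.det_pos.ne']
    _ ≤ M.det * N.det := mul_le_mul_of_nonneg_left hle hM.det_pos.le

section ThreeBlocks

variable {ι a b c : Type*} [Fintype a] [Fintype b] [Fintype c] [DecidableEq a] [DecidableEq b]
  [DecidableEq c] {X Y : Matrix ι ι 𝕜} {fa : a → ι} {fb : b → ι} {fc : c → ι}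

/-- The matrix of `posSemidef_ite_of_add_of_sub` on the indices `(fa, fc, fb, fb)` with signs
`(+, -, +, -)`; the vanishing blocks of `Y` leave only `Y_b` between the two copies of `b`. -/
lemma posSemidef_fromBlocks_of_add_of_sub (hX : X.IsHermitian) (hadd : (X + Y).PosSemidef)
    (hsub : (X - Y).PosSemidef) (hab : ∀ i j, Y (fa i) (fb j) = 0)
    (hcb : ∀ i j, Y (fc i) (fb j) = 0) (hac : ∀ i j, Y (fa i) (fc j) = 0) :
    (fromBlocks (fromBlocks (X.submatrix fa fa) 0 0 (X.submatrix fc fc))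
      (fromBlocks (X.submatrix fa fb) 0 0 (X.submatrix fc fb))
      (fromBlocks (X.submatrix fa fb) 0 0 (X.submatrix fc fb))ᴴ
      (fromBlocks (X.submatrix fb fb) (Y.submatrix fb fb) (Y.submatrix fb fb)ᴴ
        (X.submatrix fb fb))).PosSemidef := by
  have hY : Y.IsHermitian := by simpa using hadd.1.sub hX
  set g := Sum.elim (Sum.elim fa fc) (Sum.elim fb fb)
  convert posSemidef_ite_of_add_of_sub (hadd.submatrix g) (hsub.submatrix g)
    (Sum.elim (Sum.elim (fun _ ↦ true) fun _ ↦ false) (Sum.elim (fun _ ↦ true) fun _ ↦ false))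
    using 1
  ext ((i | i) | (i | i)) ((j | j) | (j | j)) <;> simp [g, hab, hcb, hac] <;>
    first
    | exact hX.apply _ _
    | exact hY.apply _ _
    | rw [← hY.apply]; simp [hab, hcb, hac]

theorem PosDef.det_mul_det_le_det_mul_det_submatrix (hX : X.PosDef) (hadd : (X + Y).PosSemidef)
    (hsub : (X - Y).PosSemidef) (hinjab : Function.Injective (Sum.elim fa fb))
    (hinjcb : Function.Injective (Sum.elim fc fb)) (hab : ∀ i j, Y (fa i) (fb j) = 0)
    (hcb : ∀ i j, Y (fc i) (fb j) = 0) (hac : ∀ i j, Y (fa i) (fc j) = 0)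
    (hb : (Y.submatrix fb fb)ᴴ * Y.submatrix fb fb = 1) :
    (X.submatrix fa fa).det * (X.submatrix fc fc).det ≤
      (X.submatrix (Sum.elim fa fb) (Sum.elim fa fb)).det *
        (X.submatrix (Sum.elim fc fb) (Sum.elim fc fb)).det := by
  have hXab := hX.submatrix hinjab
  have hXcb := hX.submatrix hinjcb
  simp only [submatrix_sumElim_of_isHermitian hX.1] at hXab hXcb ⊢
  have hXa : (X.submatrix fa fa).PosDef := hXab.submatrix Sum.inl_injective
  have hXc : (X.submatrix fc fc).PosDef := hXcb.submatrix Sum.inl_injective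
  set M := X.submatrix fb fb - (X.submatrix fa fb)ᴴ * (X.submatrix fa fa)⁻¹ * X.submatrix fa fb
  set N := X.submatrix fb fb - (X.submatrix fc fb)ᴴ * (X.submatrix fc fc)⁻¹ * X.submatrix fc fb
  have hMN : (fromBlocks M (Y.submatrix fb fb) (Y.submatrix fb fb)ᴴ N).PosSemidef := by
    have h := PosSemidef.schur_complement_fromBlocks_zero hXa hXc
      (posSemidef_fromBlocks_of_add_of_sub hX.1 hadd hsub hab hcb hac)
    rw [sub_eq_add_neg, fromBlocks_neg, fromBlocks_add] at h
    simpa [M, N, sub_eq_add_neg] using h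
  have h1 : 1 ≤ M.det * N.det := by
    have h := hMN.det_conjTranspose_mul_det_le hXab.schur_complement₁₁ hXcb.schur_complement₁₁
    rwa [← det_mul, hb, det_one] at h
  rw [hXa.det_fromBlocks₁₁, hXc.det_fromBlocks₁₁]
  calc _ = (X.submatrix fa fa).det * (X.submatrix fc fc).det * 1 := (mul_one _).symm
    _ ≤ _ := mul_le_mul_of_nonneg_left h1 (mul_pos hXa.det_pos hXc.det_pos).le
    _ = _ := by ring

end ThreeBlocks

end Matrix

lemma Complex.det_map_ofReal {n : Type*} [Fintype n] [DecidableEq n] (A : Matrix n n ℝ) :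
    (A.map Complex.ofReal).det = A.det :=
  (Complex.ofRealHom.map_det A).symm

lemma Real.log_add_log_le_log_add_log_of_mul_le {a b c d : ℝ} (ha : 0 < a) (hc : 0 < c)
    (h : a * c ≤ b * d) : Real.log a + Real.log c ≤ Real.log b + Real.log d := by
  have hbd : b * d ≠ 0 := ((mul_pos ha hc).trans_le h).ne'
  rw [← Real.log_mul ha.ne' hc.ne', ← Real.log_mul (left_ne_zero_of_mul hbd)
    (right_ne_zero_of_mul hbd)]
  exact Real.log_le_log (mul_pos ha hc) h

section Symplectic

variable (α : Type*) [DecidableEq α]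

lemma Jmat_eq_kronecker : Jmat α = kroneckerMap (· * ·) (1 : Matrix α α ℝ) symp := by
  ext ⟨a, i⟩ ⟨b, j⟩
  by_cases h : a = b <;> simp [Jmat, one_apply, h]

lemma Jmat_submatrix_prodMap {β : Type*} [DecidableEq β] {f : β → α} (hf : Function.Injective f) :
    (Jmat α).submatrix (Prod.map f id) (Prod.map f id) = Jmat β := by
  ext ⟨a, i⟩ ⟨b, j⟩
  simp [Jmat, hf.eq_iff]

variable [Fintype α]

lemma Jmat_transpose_mul_self : (Jmat α)ᵀ * Jmat α = 1 := by
  have hsymp : sympᵀ * symp = 1 := by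
    ext i j
    fin_cases i <;> fin_cases j <;> simp [symp, mul_apply, Fin.sum_univ_two, one_apply]
  rw [Jmat_eq_kronecker, ← kroneckerMap_transpose, ← mul_kronecker_mul, transpose_one, one_mul,
    hsymp, one_kronecker_one]

lemma conjTranspose_I_smul_Jmat_mul_self :
    (Complex.I • (Jmat α).map Complex.ofReal)ᴴ * (Complex.I • (Jmat α).map Complex.ofReal) = 1 := by
  have hJ : ((Jmat α).map Complex.ofReal)ᴴ * (Jmat α).map Complex.ofReal = 1 := by
    rw [← conjTranspose_map _ (fun _ ↦ (Complex.conj_ofReal _).symm),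
      conjTranspose_eq_transpose_of_trivial]
    exact (Matrix.map_mul (f := Complex.ofRealHom)).symm.trans
      (by rw [Jmat_transpose_mul_self]; exact Matrix.map_one _ (map_zero _) (map_one _))
  rw [conjTranspose_smul, smul_mul_smul_comm, hJ, Complex.star_def, Complex.conj_I, neg_mul,
    Complex.I_mul_I, neg_neg, one_smul]

end Symplectic

namespace BonaFide

variable {α : Type*} [Fintype α] [DecidableEq α] {V : Matrix (α × Fin 2) (α × Fin 2) ℝ}

lemma posSemidef_sub (hV : BonaFide V) :
    (V.map Complex.ofReal - Complex.I • (Jmat α).map Complex.ofReal).PosSemidef := by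
  have h : (V.map Complex.ofReal + Complex.I • (Jmat α).map Complex.ofReal).map star =
      V.map Complex.ofReal - Complex.I • (Jmat α).map Complex.ofReal := by
    ext p q
    simp [sub_eq_add_neg]
  rw [← h]
  exact hV.map_star

lemma posDef (hV : BonaFide V) : (V.map Complex.ofReal).PosDef :=
  posDef_of_add_of_sub hV hV.posSemidef_sub <| (isUnit_iff_isUnit_det _).mpr <|
    isUnit_det_of_left_inverse (conjTranspose_I_smul_Jmat_mul_self α)

lemma det_submatrix_pos (hV : BonaFide V) {κ : Type*} [Fintype κ] [DecidableEq κ]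
    {g : κ → α × Fin 2} (hg : Function.Injective g) : 0 < (V.submatrix g g).det := by
  have h := (hV.posDef.submatrix hg).det_pos
  rwa [submatrix_map, Complex.det_map_ofReal, Complex.zero_lt_real] at h

variable {β γ : Type*} [Fintype β] [DecidableEq β] [Fintype γ] [DecidableEq γ]

theorem det_mul_det_le_det_mul_det {V : Matrix ((α ⊕ β ⊕ γ) × Fin 2) ((α ⊕ β ⊕ γ) × Fin 2) ℝ}
    (hV : BonaFide V) :
    (V.submatrix (fun p : α × Fin 2 => (Sum.inl p.1, p.2))
        (fun p : α × Fin 2 => (Sum.inl p.1, p.2))).det *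
      (V.submatrix (fun p : γ × Fin 2 => (Sum.inr (Sum.inr p.1), p.2))
        (fun p : γ × Fin 2 => (Sum.inr (Sum.inr p.1), p.2))).det ≤
    (V.submatrix (fun p : (α ⊕ β) × Fin 2 => (Sum.map id Sum.inl p.1, p.2))
        (fun p : (α ⊕ β) × Fin 2 => (Sum.map id Sum.inl p.1, p.2))).det *
      (V.submatrix (fun p : (β ⊕ γ) × Fin 2 => (Sum.inr p.1, p.2))
        (fun p : (β ⊕ γ) × Fin 2 => (Sum.inr p.1, p.2))).det := by
  set fa := fun p : α × Fin 2 => ((Sum.inl p.1 : α ⊕ β ⊕ γ), p.2)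
  set fb := fun p : β × Fin 2 => ((Sum.inr (Sum.inl p.1) : α ⊕ β ⊕ γ), p.2)
  set fc := fun p : γ × Fin 2 => ((Sum.inr (Sum.inr p.1) : α ⊕ β ⊕ γ), p.2)
  set gab := fun p : (α ⊕ β) × Fin 2 => ((Sum.map id Sum.inl p.1 : α ⊕ β ⊕ γ), p.2)
  set gbc := fun p : (β ⊕ γ) × Fin 2 => ((Sum.inr p.1 : α ⊕ β ⊕ γ), p.2)
  have hab : Sum.elim fa fb = gab ∘ (Equiv.sumProdDistrib _ _ _).symm := by
    ext (_ | _) <;> rfl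
  have hcb : Sum.elim fc fb =
      gbc ∘ ((Equiv.sumComm _ _).trans (Equiv.sumProdDistrib _ _ _).symm) := by
    ext (_ | _) <;> rfl
  have hgab : Function.Injective gab :=
    (Sum.map_injective.mpr ⟨Function.injective_id, Sum.inl_injective⟩).prodMap
      Function.injective_id
  have hgbc : Function.Injective gbc := Sum.inr_injective.prodMap Function.injective_id
  have hJb := conjTranspose_I_smul_Jmat_mul_self β
  rw [← Jmat_submatrix_prodMap (α ⊕ β ⊕ γ) (Sum.inr_injective.comp Sum.inl_injective)] at hJb
  have key := hV.posDef.det_mul_det_le_det_mul_det_submatrix (fb := fb) hV hV.posSemidef_sub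
    (hab ▸ hgab.comp (Equiv.injective _)) (hcb ▸ hgbc.comp (Equiv.injective _))
    (fun _ _ ↦ by simp [fa, Jmat]) (fun _ _ ↦ by simp [fb, fc, Jmat])
    (fun _ _ ↦ by simp [fa, fc, Jmat]) hJb
  rw [hab, hcb, det_submatrix_comp_equiv, det_submatrix_comp_equiv] at key
  simp only [submatrix_map, Complex.det_map_ofReal] at key
  exact_mod_cast key

end BonaFide

theorem ssa_logdet_covariance_general (nA nB nC : ℕ)
    (V : Matrix ((Fin nA ⊕ Fin nB ⊕ Fin nC) × Fin 2) ((Fin nA ⊕ Fin nB ⊕ Fin nC) × Fin 2) ℝ)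
    (hbf : BonaFide V) :
    0 ≤ Real.log ((V.submatrix
            (fun p : (Fin nA ⊕ Fin nB) × Fin 2 => (Sum.map id Sum.inl p.1, p.2))
            (fun p : (Fin nA ⊕ Fin nB) × Fin 2 => (Sum.map id Sum.inl p.1, p.2))).det)
        + Real.log ((V.submatrix
            (fun p : (Fin nB ⊕ Fin nC) × Fin 2 => (Sum.inr p.1, p.2))
            (fun p : (Fin nB ⊕ Fin nC) × Fin 2 => (Sum.inr p.1, p.2))).det)
        - Real.log ((V.submatrix
            (fun p : Fin nA × Fin 2 => (Sum.inl p.1, p.2))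
            (fun p : Fin nA × Fin 2 => (Sum.inl p.1, p.2))).det)
        - Real.log ((V.submatrix
            (fun p : Fin nC × Fin 2 => (Sum.inr (Sum.inr p.1), p.2))
            (fun p : Fin nC × Fin 2 => (Sum.inr (Sum.inr p.1), p.2))).det) := by
  have h := Real.log_add_log_le_log_add_log_of_mul_le (hbf.det_submatrix_pos ?_)
    (hbf.det_submatrix_pos ?_) hbf.det_mul_det_le_det_mul_det
  · linarith
  · exact Sum.inl_injective.prodMap Function.injective_id
  · exact (Sum.inr_injective.comp Sum.inr_injective).prodMap Function.injective_id

/-- **Strong subadditivity for the log-determinant of covariance matrices.**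
For any bona fide covariance matrix of a system of `nA + nB + nC` modes,
`log det V_{AB} + log det V_{BC} - log det V_A - log det V_C ≥ 0`. -/
theorem ssa_logdet_covariance (nA nB nC : ℕ) (hA : 0 < nA) (hB : 0 < nB) (hC : 0 < nC)
    (V : Matrix ((Fin nA ⊕ Fin nB ⊕ Fin nC) × Fin 2) ((Fin nA ⊕ Fin nB ⊕ Fin nC) × Fin 2) ℝ)
    (hsymm : V.IsSymm) (hbf : BonaFide V) :
    0 ≤ Real.log ((V.submatrix
            (fun p : (Fin nA ⊕ Fin nB) × Fin 2 => (Sum.map id Sum.inl p.1, p.2))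
            (fun p : (Fin nA ⊕ Fin nB) × Fin 2 => (Sum.map id Sum.inl p.1, p.2))).det)
        + Real.log ((V.submatrix
            (fun p : (Fin nB ⊕ Fin nC) × Fin 2 => (Sum.inr p.1, p.2))
            (fun p : (Fin nB ⊕ Fin nC) × Fin 2 => (Sum.inr p.1, p.2))).det)
        - Real.log ((V.submatrix
            (fun p : Fin nA × Fin 2 => (Sum.inl p.1, p.2))
            (fun p : Fin nA × Fin 2 => (Sum.inl p.1, p.2))).det)
        - Real.log ((V.submatrix
            (fun p : Fin nC × Fin 2 => (Sum.inr (Sum.inr p.1), p.2))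
            (fun p : Fin nC × Fin 2 => (Sum.inr (Sum.inr p.1), p.2))).det) :=
  ssa_logdet_covariance_general nA nB nC V hbf

end
end

section
/- Concavity of the conditional log-determinant: Fix integers p, q ≥ 1 and for an (p+q)×(p+q) real symmetric positive definite matrix M let M_A denote its leading p×p principal submatrix. Then the function M ↦ log det M − log det M_A is concave on the set of (p+q)×(p+q) real symmetric positive definite matrices: for all such V, W and t ∈ [0,1], log det(tV+(1−t)W) − log det((tV+(1−t)W)_A) ≥ t·(log det V − log det V_A) + (1−t)·(log det W − log det W_A). -/
/-!
Writing `M = [A B; C D]`, the determinant factorises as `det M = det A · det S(M)` with the Schur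
complement `S(M) = D - C A⁻¹ B`, so the function in question is `log det ∘ S`. For positive
definite `M`, `S(M)` is the largest `X` in the Loewner order with `[0 0; 0 X] ≤ M`; since that
constraint is preserved under convex combinations, `S` is Loewner-concave. Finally `log det` is
Loewner-monotone and concave on positive definite matrices: a congruence `X ↦ U X Uᴴ` taking one
matrix to `1` reduces both facts to the eigenvalues of a single Hermitian matrix, where they are
`1 ≤ ∏ (1 + λᵢ)` and the concavity of `log`.
-/

open scoped MatrixOrder ComplexOrder

namespace Matrix

section PosDef

variable {𝕜 n : Type*} [RCLike 𝕜]

theorem convex_setOf_posDef : Convex ℝ {M : Matrix n n 𝕜 | M.PosDef} := by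
  intro V hV W hW a b ha hb hab
  rcases ha.eq_or_lt with rfl | ha
  · simpa [show b = 1 by linarith] using hW
  · exact (hV.smul ha).add_posSemidef (hW.posSemidef.smul hb)

variable [Fintype n] [DecidableEq n]

theorem IsHermitian.det_cfc {A : Matrix n n 𝕜} (hA : A.IsHermitian) (f : ℝ → ℝ) :
    (cfc f A).det = ∏ i, (f (hA.eigenvalues i) : 𝕜) := by
  rw [hA.cfc_eq]
  simp [IsHermitian.cfc, -Unitary.conjStarAlgAut_apply]

theorem PosDef.exists_isUnit_conj_eq_one {Q : Matrix n n 𝕜} (hQ : Q.PosDef) :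
    ∃ U : Matrix n n 𝕜, IsUnit U ∧ U * Q * star U = 1 ∧
      ∀ Y : Matrix n n 𝕜, (U * Y * star U).det = Y.det / Q.det := by
  set S := CFC.sqrt Q
  have hS : IsUnit S.det := (isUnit_iff_isUnit_det _).mp <|
    (CFC.isUnit_sqrt_iff Q hQ.posSemidef.nonneg).mpr hQ.isUnit
  have hSS : S * S = Q := CFC.sqrt_mul_sqrt_self Q hQ.posSemidef.nonneg
  have hSstar : star S = S := (IsSelfAdjoint.of_nonneg (CFC.sqrt_nonneg Q)).star_eq
  have hQ1 : S⁻¹ * Q * star S⁻¹ = 1 := by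
    rw [star_eq_conjTranspose, conjTranspose_nonsing_inv, ← star_eq_conjTranspose, hSstar, ← hSS,
      ← Matrix.mul_assoc, nonsing_inv_mul _ hS, Matrix.one_mul, mul_nonsing_inv _ hS]
  refine ⟨S⁻¹, isUnit_nonsing_inv_iff.mpr ((isUnit_iff_isUnit_det _).mpr hS), hQ1, fun Y ↦ ?_⟩
  rw [eq_div_iff hQ.det_pos.ne', ← mul_one Y.det, ← det_one (n := n), ← hQ1]
  simp only [det_mul]
  ring

end PosDef

section LogDet

variable {n : Type*} [Fintype n] [DecidableEq n]

theorem PosSemidef.one_le_det_one_add {Z : Matrix n n ℝ} (hZ : Z.PosSemidef) :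
    1 ≤ (1 + Z).det := by
  have h : 1 + Z = cfc (fun x : ℝ ↦ 1 + x) Z := by
    rw [cfc_const_add .., cfc_id' ..]
    simp [Algebra.algebraMap_eq_smul_one]
  rw [h, hZ.1.det_cfc]
  exact Finset.one_le_prod fun i _ ↦ by simpa using hZ.eigenvalues_nonneg i

theorem PosDef.mul_log_det_le_log_det_smul_one_add_smul {Z : Matrix n n ℝ} (hZ : Z.PosDef)
    {t : ℝ} (ht0 : 0 ≤ t) (ht1 : t ≤ 1) :
    t * Real.log Z.det ≤ Real.log ((1 - t) • 1 + t • Z).det := by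
  have h : (1 - t) • 1 + t • Z = cfc (fun x ↦ (1 - t) + t * x) Z := by
    rw [cfc_const_add .., cfc_const_mul .., cfc_id' ..]
    simp [Algebra.algebraMap_eq_smul_one]
  have hpos := hZ.eigenvalues_pos
  have h1 : (1 : ℝ) ∈ Set.Ioi 0 := Set.mem_Ioi.2 one_pos
  rw [h, hZ.1.det_cfc, hZ.1.det_eq_prod_eigenvalues, Real.log_prod, Real.log_prod, Finset.mul_sum]
  · refine Finset.sum_le_sum fun i _ ↦ ?_
    have hconc := strictConcaveOn_log_Ioi.concaveOn.2 (hpos i) h1 ht0 (sub_nonneg.2 ht1) (by ring)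
    simpa [add_comm] using hconc
  · refine fun i _ ↦ ne_of_gt ?_
    have hmem := convex_Ioi (0 : ℝ) (hpos i) h1 ht0 (sub_nonneg.2 ht1) (by ring)
    simpa [add_comm] using hmem
  · exact fun i _ ↦ (hpos i).ne'

theorem PosDef.det_le_det {K X : Matrix n n ℝ} (hK : K.PosDef) (hKX : K ≤ X) : K.det ≤ X.det := by
  obtain ⟨U, hU, hUK, hdet⟩ := hK.exists_isUnit_conj_eq_one
  have hZ : (U * (X - K) * star U).PosSemidef :=
    (IsUnit.posSemidef_star_right_conjugate_iff hU).mpr hKX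
  have hX : U * X * star U = 1 + U * (X - K) * star U := by
    rw [← hUK, Matrix.mul_sub, Matrix.sub_mul, add_sub_cancel]
  have := hZ.one_le_det_one_add
  rwa [← hX, hdet, one_le_div hK.det_pos] at this

theorem concaveOn_log_det :
    ConcaveOn ℝ {M : Matrix n n ℝ | M.PosDef} (fun M ↦ Real.log M.det) := by
  refine ⟨convex_setOf_posDef, fun P hP Q hQ a b ha hb hab ↦ ?_⟩
  obtain rfl : b = 1 - a := by linarith
  obtain ⟨U, hU, hUQ, hdet⟩ := PosDef.exists_isUnit_conj_eq_one hQ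
  have hZ : (U * P * star U).PosDef := (IsUnit.posDef_star_right_conjugate_iff hU).mpr hP
  have hR : (a • P + (1 - a) • Q).PosDef := convex_setOf_posDef hP hQ ha hb (by ring)
  have hconj : U * (a • P + (1 - a) • Q) * star U = (1 - a) • 1 + a • (U * P * star U) := by
    rw [Matrix.mul_add, Matrix.add_mul, Matrix.mul_smul, Matrix.mul_smul, Matrix.smul_mul,
      Matrix.smul_mul, hUQ, add_comm]
  have key := hZ.mul_log_det_le_log_det_smul_one_add_smul ha (by linarith)
  rw [← hconj, hdet, hdet, Real.log_div hP.det_pos.ne' hQ.det_pos.ne',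
    Real.log_div hR.det_pos.ne' hQ.det_pos.ne'] at key
  simp only [smul_eq_mul]
  linarith

end LogDet

section SchurComplement

variable {α 𝕜 m l : Type*}

theorem PosDef.toBlocks₁₁ [RCLike 𝕜] {M : Matrix (m ⊕ l) (m ⊕ l) 𝕜} (hM : M.PosDef) :
    M.toBlocks₁₁.PosDef :=
  hM.submatrix Sum.inl_injective

variable [Fintype m] [DecidableEq m] [Fintype l]

noncomputable def schurCompl₁₁ [CommRing α] (M : Matrix (m ⊕ l) (m ⊕ l) α) : Matrix l l α :=
  M.toBlocks₂₂ - M.toBlocks₂₁ * M.toBlocks₁₁⁻¹ * M.toBlocks₁₂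

theorem det_eq_det_toBlocks₁₁_mul_det_schurCompl₁₁ [DecidableEq l] [CommRing α]
    (M : Matrix (m ⊕ l) (m ⊕ l) α) [Invertible M.toBlocks₁₁] :
    M.det = M.toBlocks₁₁.det * M.schurCompl₁₁.det := by
  conv_lhs => rw [← fromBlocks_toBlocks M]
  rw [det_fromBlocks₁₁, invOf_eq_nonsing_inv, schurCompl₁₁]

variable [RCLike 𝕜]

theorem PosDef.le_schurCompl₁₁_iff {M : Matrix (m ⊕ l) (m ⊕ l) 𝕜} (hM : M.PosDef)
    {X : Matrix l l 𝕜} : X ≤ M.schurCompl₁₁ ↔ fromBlocks 0 0 0 X ≤ M := by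
  have hA := hM.toBlocks₁₁
  have := hA.isUnit.invertible
  have hC : M.toBlocks₁₂ᴴ = M.toBlocks₂₁ := by
    have := hM.1
    rw [← fromBlocks_toBlocks M] at this
    exact (isHermitian_fromBlocks_iff.mp this).2.1
  have hsub : M - fromBlocks 0 0 0 X
      = fromBlocks M.toBlocks₁₁ M.toBlocks₁₂ M.toBlocks₁₂ᴴ (M.toBlocks₂₂ - X) := by
    conv_lhs => rw [← fromBlocks_toBlocks M]
    rw [hC, sub_eq_add_neg, fromBlocks_neg, fromBlocks_add]
    simp [sub_eq_add_neg]
  rw [le_iff, le_iff, hsub, hA.fromBlocks₁₁, hC, schurCompl₁₁, sub_right_comm]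

theorem PosDef.schurCompl₁₁ [DecidableEq l] {M : Matrix (m ⊕ l) (m ⊕ l) 𝕜} (hM : M.PosDef) :
    M.schurCompl₁₁.PosDef := by
  have hA := hM.toBlocks₁₁
  have := hA.isUnit.invertible
  have hS : M.schurCompl₁₁.PosSemidef := nonneg_iff_posSemidef.mp <|
    hM.le_schurCompl₁₁_iff.mpr (by rw [fromBlocks_zero]; exact hM.posSemidef.nonneg)
  refine hS.posDef_iff_det_ne_zero.mpr fun h ↦ hM.det_pos.ne' ?_
  rw [det_eq_det_toBlocks₁₁_mul_det_schurCompl₁₁, h, mul_zero]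

theorem concaveOn_schurCompl₁₁ :
    ConcaveOn ℝ {M : Matrix (m ⊕ l) (m ⊕ l) 𝕜 | M.PosDef} schurCompl₁₁ := by
  refine ⟨convex_setOf_posDef, fun V hV W hW a b ha hb hab ↦ ?_⟩
  have hT : (a • V + b • W).PosDef := convex_setOf_posDef hV hW ha hb hab
  rw [hT.le_schurCompl₁₁_iff]
  have hVS := (PosDef.le_schurCompl₁₁_iff hV).mp le_rfl
  have hWS := (PosDef.le_schurCompl₁₁_iff hW).mp le_rfl
  have hblocks : (fromBlocks 0 0 0 (a • V.schurCompl₁₁ + b • W.schurCompl₁₁) :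
        Matrix (m ⊕ l) (m ⊕ l) 𝕜)
      = a • fromBlocks 0 0 0 V.schurCompl₁₁ + b • fromBlocks 0 0 0 W.schurCompl₁₁ := by
    simp [fromBlocks_smul, fromBlocks_add]
  rw [hblocks]
  gcongr

theorem PosDef.log_det_sub_log_det_toBlocks₁₁ [DecidableEq l] {M : Matrix (m ⊕ l) (m ⊕ l) ℝ}
    (hM : M.PosDef) :
    Real.log M.det - Real.log M.toBlocks₁₁.det = Real.log M.schurCompl₁₁.det := by
  have := hM.toBlocks₁₁.isUnit.invertible
  rw [det_eq_det_toBlocks₁₁_mul_det_schurCompl₁₁,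
    Real.log_mul hM.toBlocks₁₁.det_pos.ne' hM.schurCompl₁₁.det_pos.ne', add_sub_cancel_left]

theorem concaveOn_log_det_schurCompl₁₁ [DecidableEq l] :
    ConcaveOn ℝ {M : Matrix (m ⊕ l) (m ⊕ l) ℝ | M.PosDef}
      (fun M ↦ Real.log M.schurCompl₁₁.det) := by
  refine ⟨convex_setOf_posDef, fun V hV W hW a b ha hb hab ↦ ?_⟩
  have hK : (a • V.schurCompl₁₁ + b • W.schurCompl₁₁).PosDef :=
    convex_setOf_posDef hV.schurCompl₁₁ hW.schurCompl₁₁ ha hb hab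
  calc a • Real.log V.schurCompl₁₁.det + b • Real.log W.schurCompl₁₁.det
      ≤ Real.log (a • V.schurCompl₁₁ + b • W.schurCompl₁₁).det :=
        concaveOn_log_det.2 hV.schurCompl₁₁ hW.schurCompl₁₁ ha hb hab
    _ ≤ Real.log (a • V + b • W).schurCompl₁₁.det :=
        Real.log_le_log hK.det_pos <|
          hK.det_le_det (concaveOn_schurCompl₁₁.2 hV hW ha hb hab)

end SchurComplement

end Matrix

theorem conditional_logdet_concave_general (p q : ℕ)
    (V W : Matrix (Fin p ⊕ Fin q) (Fin p ⊕ Fin q) ℝ)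
    (hVpos : V.PosDef)
    (hWpos : W.PosDef)
    (t : ℝ) (ht0 : 0 ≤ t) (ht1 : t ≤ 1) :
    Real.log ((t • V + (1 - t) • W).det)
        - Real.log (((t • V + (1 - t) • W).submatrix Sum.inl Sum.inl).det)
      ≥ t * (Real.log V.det - Real.log ((V.submatrix Sum.inl Sum.inl).det))
        + (1 - t) * (Real.log W.det - Real.log ((W.submatrix Sum.inl Sum.inl).det)) := by
  have hweights : t + (1 - t) = 1 := add_sub_cancel t 1
  have hT : (t • V + (1 - t) • W).PosDef :=
    Matrix.convex_setOf_posDef hVpos hWpos ht0 (sub_nonneg.2 ht1) hweights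
  have key : t * Real.log V.schurCompl₁₁.det + (1 - t) * Real.log W.schurCompl₁₁.det
      ≤ Real.log (t • V + (1 - t) • W).schurCompl₁₁.det :=
    Matrix.concaveOn_log_det_schurCompl₁₁.2 hVpos hWpos ht0 (sub_nonneg.2 ht1) hweights
  rwa [← hVpos.log_det_sub_log_det_toBlocks₁₁, ← hWpos.log_det_sub_log_det_toBlocks₁₁,
    ← hT.log_det_sub_log_det_toBlocks₁₁] at key

/-- **Concavity of the conditional log-determinant.** For `(p+q) × (p+q)` real
symmetric positive definite matrices, with `M_A` the leading `p × p` principal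
block, the map `M ↦ log det M − log det M_A` is concave. -/
theorem conditional_logdet_concave (p q : ℕ) (hp : 1 ≤ p) (hq : 1 ≤ q)
    (V W : Matrix (Fin p ⊕ Fin q) (Fin p ⊕ Fin q) ℝ)
    (hVsymm : V.IsSymm) (hVpos : V.PosDef)
    (hWsymm : W.IsSymm) (hWpos : W.PosDef)
    (t : ℝ) (ht0 : 0 ≤ t) (ht1 : t ≤ 1) :
    Real.log ((t • V + (1 - t) • W).det)
        - Real.log (((t • V + (1 - t) • W).submatrix Sum.inl Sum.inl).det)
      ≥ t * (Real.log V.det - Real.log ((V.submatrix Sum.inl Sum.inl).det))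
        + (1 - t) * (Real.log W.det - Real.log ((W.submatrix Sum.inl Sum.inl).det)) :=
  conditional_logdet_concave_general p q V W hVpos hWpos t ht0 ht1
end

section
/- Equal complementary marginal determinants of pure Gaussian covariance matrices: Let n be a positive integer, let S be a 2n×2n real symplectic matrix (S J_n Sᵀ = J_n), and set V = S Sᵀ. Then for any subset X of the n modes, det V_X = det V_{Xᶜ}, where Xᶜ is the complementary set of modes. In particular det V = 1. -/
open Matrix

noncomputable section

/-
Since `S` is symplectic so is `Sᵀ`, and then `V = S Sᵀ` has inverse `J V Jᵀ`.
Jacobi's complementary-minor identity gives `det V_X = det V · det (J V Jᵀ)_{Xᶜ}`.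
Here `det V = (det S)² = 1`, and because `J` acts mode by mode, `(J V Jᵀ)_{Xᶜ}` is
the conjugate of `V_{Xᶜ}` by the smaller form `J`, which has determinant `1`.
-/

namespace Matrix

variable {m n ι R : Type*} [Fintype m] [Fintype n] [Fintype ι]
  [DecidableEq m] [DecidableEq n] [DecidableEq ι] [CommRing R]

theorem det_toBlocks₁₁_of_mul_eq_one {M N : Matrix (m ⊕ n) (m ⊕ n) R} (h : M * N = 1) :
    M.toBlocks₁₁.det = M.det * N.toBlocks₂₂.det := by
  rw [← fromBlocks_toBlocks M, ← fromBlocks_toBlocks N, fromBlocks_multiply,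
    ← fromBlocks_one] at h
  obtain ⟨-, h₁₂, -, h₂₂⟩ := fromBlocks_inj.mp h
  have key : M * fromBlocks 1 N.toBlocks₁₂ 0 N.toBlocks₂₂
      = fromBlocks M.toBlocks₁₁ 0 M.toBlocks₂₁ 1 := by
    conv_lhs => rw [← fromBlocks_toBlocks M]
    simp [fromBlocks_multiply, h₁₂, h₂₂]
  simpa [det_fromBlocks_zero₂₁, det_fromBlocks_zero₁₂] using (congrArg det key).symm

/-- Jacobi's complementary-minor identity, for a splitting `e` of the index type. -/
theorem det_submatrix_inl_of_mul_eq_one {M N : Matrix ι ι R} (h : M * N = 1)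
    (e : m ⊕ n ≃ ι) :
    (M.submatrix (e ∘ Sum.inl) (e ∘ Sum.inl)).det
      = M.det * (N.submatrix (e ∘ Sum.inr) (e ∘ Sum.inr)).det := by
  have h' : M.submatrix e e * N.submatrix e e = 1 := by
    rw [submatrix_mul_equiv, h, submatrix_one_equiv]
  have := det_toBlocks₁₁_of_mul_eq_one h'
  rwa [det_submatrix_equiv_self] at this

theorem transpose_mul_mul_eq_of_mul_mul_transpose_eq {S J : Matrix ι ι R}
    (hJ : J * Jᵀ = 1) (hS : S * J * Sᵀ = J) : Sᵀ * J * S = J := by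
  have hJ' : Jᵀ * J = 1 := mul_eq_one_comm.mp hJ
  have hinv : J * Sᵀ * Jᵀ * S = 1 := by
    refine mul_eq_one_comm.mp ?_
    rw [← Matrix.mul_assoc, ← Matrix.mul_assoc, hS, hJ]
  have h : Sᵀ * Jᵀ * S = Jᵀ := by
    calc Sᵀ * Jᵀ * S = Jᵀ * (J * Sᵀ * Jᵀ * S) := by
          rw [← Matrix.one_mul (Sᵀ * Jᵀ * S), ← hJ']; simp only [Matrix.mul_assoc]
      _ = Jᵀ := by rw [hinv, Matrix.mul_one]
  simpa [Matrix.transpose_mul, Matrix.mul_assoc] using congrArg transpose h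

theorem mul_transpose_mul_conj_eq_one {S J : Matrix ι ι R}
    (hJ : J * Jᵀ = 1) (hS : S * J * Sᵀ = J) : S * Sᵀ * (J * (S * Sᵀ) * Jᵀ) = 1 := by
  calc S * Sᵀ * (J * (S * Sᵀ) * Jᵀ) = S * (Sᵀ * J * S) * Sᵀ * Jᵀ := by
        simp only [Matrix.mul_assoc]
    _ = 1 := by rw [transpose_mul_mul_eq_of_mul_mul_transpose_eq hJ hS, hS, hJ]

theorem det_mul_transpose_eq_one {S J : Matrix ι ι R} (hJ : IsUnit J.det)
    (hS : S * J * Sᵀ = J) : (S * Sᵀ).det = 1 := by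
  have h := congrArg det hS
  rw [det_mul, det_mul, det_transpose, mul_right_comm] at h
  rw [det_mul, det_transpose]
  simpa using hJ.mul_eq_right.mp h

end Matrix

theorem symp_mul_transpose : symp * sympᵀ = 1 := by
  ext i j
  fin_cases i <;> fin_cases j <;> simp [symp, mul_apply, Fin.sum_univ_two, one_apply]

theorem det_symp : symp.det = 1 := by simp [symp, det_fin_two_of]

section Jmat

variable (α : Type*) [DecidableEq α]

theorem Jmat_eq_submatrix_blockDiagonal :
    Jmat α = (blockDiagonal fun _ : α => symp).submatrix
      (Equiv.prodComm α (Fin 2)) (Equiv.prodComm α (Fin 2)) := by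
  ext ⟨i, a⟩ ⟨j, b⟩
  simp [Jmat, blockDiagonal_apply]

theorem det_Jmat [Fintype α] : (Jmat α).det = 1 := by
  rw [Jmat_eq_submatrix_blockDiagonal, det_submatrix_equiv_self, det_blockDiagonal]
  simp [det_symp]

theorem Jmat_mul_transpose [Fintype α] : Jmat α * (Jmat α)ᵀ = 1 := by
  rw [Jmat_eq_submatrix_blockDiagonal, transpose_submatrix, submatrix_mul_equiv,
    blockDiagonal_transpose, ← blockDiagonal_mul]
  simp only [symp_mul_transpose]
  rw [← Pi.one_def, blockDiagonal_one]
  exact submatrix_one_equiv _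

end Jmat

theorem submatrix_Jmat_mul_mul_transpose {α β : Type*} [DecidableEq α] [Fintype α]
    [DecidableEq β] [Fintype β] (u : β → α) (W : Matrix (α × Fin 2) (α × Fin 2) ℝ) :
    (Jmat α * W * (Jmat α)ᵀ).submatrix (fun p : β × Fin 2 => (u p.1, p.2))
        (fun p : β × Fin 2 => (u p.1, p.2))
      = Jmat β * W.submatrix (fun p : β × Fin 2 => (u p.1, p.2))
          (fun p : β × Fin 2 => (u p.1, p.2)) * (Jmat β)ᵀ := by
  ext ⟨i, a⟩ ⟨j, b⟩
  simp [mul_apply, Jmat, Fintype.sum_prod_type, ite_mul, mul_ite, Finset.sum_ite_eq]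

def modeSplitEquiv {α : Type*} [DecidableEq α] [Fintype α] (X : Finset α) :
    ({x // x ∈ X} × Fin 2) ⊕ ({x // x ∈ Xᶜ} × Fin 2) ≃ α × Fin 2 :=
  (Equiv.sumProdDistrib _ _ (Fin 2)).symm.trans
    ((((Equiv.refl _).sumCongr (Equiv.subtypeEquivRight fun _ => Finset.mem_compl)).trans
      (Equiv.sumCompl (· ∈ X))).prodCongr (Equiv.refl (Fin 2)))

theorem modeSplitEquiv_comp_inl {α : Type*} [DecidableEq α] [Fintype α] (X : Finset α) :
    modeSplitEquiv X ∘ Sum.inl = fun p : {x // x ∈ X} × Fin 2 => ((p.1 : α), p.2) :=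
  rfl

theorem modeSplitEquiv_comp_inr {α : Type*} [DecidableEq α] [Fintype α] (X : Finset α) :
    modeSplitEquiv X ∘ Sum.inr = fun p : {x // x ∈ Xᶜ} × Fin 2 => ((p.1 : α), p.2) :=
  rfl

theorem pure_gaussian_complementary_marginals_general (n : ℕ)
    (S : Matrix (Fin n × Fin 2) (Fin n × Fin 2) ℝ)
    (hS : S * Jmat (Fin n) * Sᵀ = Jmat (Fin n)) :
    (∀ X : Finset (Fin n),
      ((S * Sᵀ).submatrix
          (fun p : {x // x ∈ X} × Fin 2 => ((p.1 : Fin n), p.2))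
          (fun p : {x // x ∈ X} × Fin 2 => ((p.1 : Fin n), p.2))).det
        = ((S * Sᵀ).submatrix
          (fun p : {x // x ∈ Xᶜ} × Fin 2 => ((p.1 : Fin n), p.2))
          (fun p : {x // x ∈ Xᶜ} × Fin 2 => ((p.1 : Fin n), p.2))).det)
    ∧ (S * Sᵀ).det = 1 := by
  have hdetV : (S * Sᵀ).det = 1 := det_mul_transpose_eq_one (by simp [det_Jmat]) hS
  refine ⟨fun X => ?_, hdetV⟩
  have hinv := mul_transpose_mul_conj_eq_one (Jmat_mul_transpose (Fin n)) hS
  have hjacobi := det_submatrix_inl_of_mul_eq_one hinv (modeSplitEquiv X)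
  rw [modeSplitEquiv_comp_inl, modeSplitEquiv_comp_inr, hdetV, one_mul,
    submatrix_Jmat_mul_mul_transpose] at hjacobi
  rw [hjacobi, det_mul, det_mul, det_transpose, det_Jmat, one_mul, mul_one]

/-- **Equal complementary marginal determinants of pure Gaussian covariance
matrices.** If `S` is symplectic (`S Jₙ Sᵀ = Jₙ`) and `V = S Sᵀ`, then for every
subset `X` of the `n` modes, `det V_X = det V_{Xᶜ}`; in particular `det V = 1`. -/
theorem pure_gaussian_complementary_marginals (n : ℕ) (hn : 0 < n)
    (S : Matrix (Fin n × Fin 2) (Fin n × Fin 2) ℝ)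
    (hS : S * Jmat (Fin n) * Sᵀ = Jmat (Fin n)) :
    (∀ X : Finset (Fin n),
      ((S * Sᵀ).submatrix
          (fun p : {x // x ∈ X} × Fin 2 => ((p.1 : Fin n), p.2))
          (fun p : {x // x ∈ X} × Fin 2 => ((p.1 : Fin n), p.2))).det
        = ((S * Sᵀ).submatrix
          (fun p : {x // x ∈ Xᶜ} × Fin 2 => ((p.1 : Fin n), p.2))
          (fun p : {x // x ∈ Xᶜ} × Fin 2 => ((p.1 : Fin n), p.2))).det)
    ∧ (S * Sᵀ).det = 1 :=
  pure_gaussian_complementary_marginals_general n S hS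

end
end

section
/- Monotonicity of f_n in m: For every positive integer n, the function m ↦ f_n(m) is strictly monotonically increasing on (0, ∞): for all real 0 < x < y, f_n(x) < f_n(y). -/
/-- The function `f_n(m)` of Eq. (13): tight bound relating von Neumann entropy
and log-determinant of Gaussian states, with `coth t = cosh t / sinh t`. -/
noncomputable def f (n : ℕ) (m : ℝ) : ℝ :=
  ((n : ℝ) / 2) * (Real.log ((Real.exp (m / (n : ℝ)) - 1) / 4)
    + Real.exp (m / (2 * (n : ℝ))) *
        Real.log (Real.cosh (m / (4 * (n : ℝ))) / Real.sinh (m / (4 * (n : ℝ)))))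

/-! In the variable `u = exp (m / (2 n)) > 1` one has `coth (m / (4 n)) = (u + 1) / (u - 1)` and
`exp (m / n) - 1 = u ^ 2 - 1`, so `f n m = n / 2 * (log ((u ^ 2 - 1) / 4) + u * log ((u + 1) / (u - 1)))`.
Differentiating in `u`, the rational terms `2u / (u ^ 2 - 1)` and `-2u / (u ^ 2 - 1)` cancel,
leaving the derivative `log ((u + 1) / (u - 1)) > 0`. -/

open Real Set

noncomputable def fReduced (u : ℝ) : ℝ :=
  log ((u ^ 2 - 1) / 4) + u * log ((u + 1) / (u - 1))

lemma Real.cosh_div_sinh_eq (s : ℝ) :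
    cosh s / sinh s = (exp (2 * s) + 1) / (exp (2 * s) - 1) := by
  have hexp : exp (2 * s) = exp s * exp s := by rw [← exp_add]; ring_nf
  have hs : exp s ≠ 0 := exp_ne_zero s
  rw [cosh_eq, sinh_eq, exp_neg, hexp, ← mul_div_mul_left _ _ hs]
  field_simp

lemma f_eq_mul_fReduced (n : ℕ) (m : ℝ) :
    f n m = (n : ℝ) / 2 * fReduced (exp (m / (2 * n))) := by
  have hsq : exp (m / n) = exp (m / (2 * n)) ^ 2 := by
    rw [← exp_nat_mul]; congr 1; ring
  have hcoth : cosh (m / (4 * n)) / sinh (m / (4 * n))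
      = (exp (m / (2 * n)) + 1) / (exp (m / (2 * n)) - 1) := by
    rw [cosh_div_sinh_eq]; congr 3 <;> ring
  rw [f, fReduced, hsq, hcoth]

lemma hasDerivAt_fReduced {u : ℝ} (hu : 1 < u) :
    HasDerivAt fReduced (log ((u + 1) / (u - 1))) u := by
  have hu1 : u - 1 ≠ 0 := by linarith
  have hu2 : u + 1 ≠ 0 := by linarith
  have hsq : u ^ 2 - 1 ≠ 0 := by nlinarith
  have hquot : (u + 1) / (u - 1) ≠ 0 := div_ne_zero hu2 hu1
  have dlog : HasDerivAt (fun v => log ((v ^ 2 - 1) / 4)) (2 * u / 4 / ((u ^ 2 - 1) / 4)) u := by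
    have := (((hasDerivAt_pow 2 u).sub_const 1).div_const 4).log (by positivity)
    simpa using this
  have dquot : HasDerivAt (fun v => (v + 1) / (v - 1))
      ((1 * (u - 1) - (u + 1) * 1) / (u - 1) ^ 2) u :=
    ((hasDerivAt_id u).add_const 1).div ((hasDerivAt_id u).sub_const 1) hu1
  refine (dlog.add ((hasDerivAt_id' u).mul (dquot.log hquot))).congr_deriv ?_
  field_simp
  ring

lemma fReduced_strictMonoOn : StrictMonoOn fReduced (Ioi 1) := by
  refine strictMonoOn_of_hasDerivWithinAt_pos (convex_Ioi 1)
    (fun u hu => (hasDerivAt_fReduced hu).continuousAt.continuousWithinAt)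
    (fun u hu => (hasDerivAt_fReduced (interior_subset hu)).hasDerivWithinAt) ?_
  intro u hu
  rw [interior_Ioi, mem_Ioi] at hu
  exact log_pos ((one_lt_div (by linarith)).2 (by linarith))

/-- **Monotonicity of `f_n` in `m`**: for every positive integer `n`, the map
`m ↦ f n m` is strictly increasing on `(0, ∞)`. -/
theorem f_strictMonoOn (n : ℕ) (hn : 0 < n) (x y : ℝ) (hx : 0 < x) (hxy : x < y) :
    f n x < f n y := by
  have hn' : (0 : ℝ) < n := Nat.cast_pos.2 hn
  have h2n : (0 : ℝ) < 2 * n := by positivity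
  rw [f_eq_mul_fReduced, f_eq_mul_fReduced]
  refine mul_lt_mul_of_pos_left (fReduced_strictMonoOn ?_ ?_ ?_) (by positivity)
  · exact one_lt_exp_iff.2 (div_pos hx h2n)
  · exact one_lt_exp_iff.2 (div_pos (hx.trans hxy) h2n)
  · exact exp_lt_exp.2 (div_lt_div_of_pos_right hxy h2n)
end

section
/- Monotonicity of f_n in n: For every real m > 0 and every positive integer n, f_n(m) ≤ f_{n+1}(m). -/
open Real Set

noncomputable def g (t : ℝ) : ℝ :=
  t + exp t * (cosh t * log (cosh t) - sinh t * log (sinh t))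

lemma continuous_g : Continuous g :=
  continuous_id.add <| continuous_exp.mul <|
    (continuous_mul_log.comp continuous_cosh).sub (continuous_mul_log.comp continuous_sinh)

lemma exp_two_mul_eq_sq (t : ℝ) : exp (2 * t) = (cosh t + sinh t) ^ 2 := by
  rw [cosh_add_sinh, ← exp_nat_mul]; norm_num

lemma g_zero : g 0 = 0 := by
  simp [g]

noncomputable def g' (t : ℝ) : ℝ :=
  exp (2 * t) * (log (cosh t) - log (sinh t))

lemma hasDerivAt_g {t : ℝ} (ht : t ≠ 0) : HasDerivAt g (g' t) t := by
  have hs : sinh t ≠ 0 := sinh_ne_zero.2 ht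
  have hc : cosh t ≠ 0 := (cosh_pos t).ne'
  have h := (hasDerivAt_id t).add <| (hasDerivAt_exp t).mul <|
    ((hasDerivAt_mul_log hc).comp t (hasDerivAt_cosh t)).sub
      ((hasDerivAt_mul_log hs).comp t (hasDerivAt_sinh t))
  refine h.congr_deriv ?_
  simp only [Pi.sub_apply, Function.comp_apply]
  rw [g', exp_two_mul_eq_sq, ← cosh_add_sinh]
  linear_combination -cosh_sq_sub_sinh_sq t

lemma hasDerivAt_g' {t : ℝ} (ht : t ≠ 0) :
    HasDerivAt g' (2 * exp (2 * t) *
      (log (cosh t / sinh t) - (cosh t / sinh t - (cosh t / sinh t)⁻¹) / 2)) t := by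
  have hs : sinh t ≠ 0 := sinh_ne_zero.2 ht
  have hc : cosh t ≠ 0 := (cosh_pos t).ne'
  have h := ((hasDerivAt_exp (2 * t)).comp t ((hasDerivAt_id t).const_mul 2)).mul <|
    ((hasDerivAt_log hc).comp t (hasDerivAt_cosh t)).sub
      ((hasDerivAt_log hs).comp t (hasDerivAt_sinh t))
  refine h.congr_deriv ?_
  simp only [Pi.sub_apply, Function.comp_apply]
  rw [log_div hc hs]
  field_simp
  ring

lemma log_le_half_sub_inv {x : ℝ} (hx : 1 ≤ x) : log x ≤ (x - x⁻¹) / 2 := by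
  rw [← sinh_log (by linarith)]
  exact self_le_sinh_iff.2 (log_nonneg hx)

lemma one_le_cosh_div_sinh {t : ℝ} (ht : 0 < t) : 1 ≤ cosh t / sinh t := by
  rw [one_le_div (sinh_pos_iff.2 ht)]
  exact (sinh_lt_cosh t).le

lemma concaveOn_g : ConcaveOn ℝ (Ici 0) g :=
  concaveOn_of_hasDerivWithinAt2_nonpos (convex_Ici 0) continuous_g.continuousOn
    (fun _ ht ↦ (hasDerivAt_g (interior_Ici.subset ht).ne').hasDerivWithinAt)
    (fun _ ht ↦ (hasDerivAt_g' (interior_Ici.subset ht).ne').hasDerivWithinAt)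
    fun _ ht ↦ mul_nonpos_of_nonneg_of_nonpos (by positivity)
      (sub_nonpos.2 (log_le_half_sub_inv (one_le_cosh_div_sinh (interior_Ici.subset ht))))

lemma g_div_le_g_div_of_le {a b : ℝ} (ha : 0 < a) (hab : a ≤ b) : g b / b ≤ g a / a := by
  have h := concaveOn_g.antitoneOn_slope_gt self_mem_Ici ⟨mem_Ici.2 ha.le, ha⟩
    ⟨mem_Ici.2 (ha.trans_le hab).le, ha.trans_le hab⟩ hab
  simpa [slope_fun_def_field, g_zero] using h

lemma log_exp_four_mul_sub_one_div_four {t : ℝ} (ht : t ≠ 0) :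
    log ((exp (4 * t) - 1) / 4) = 2 * t + log (sinh t) + log (cosh t) := by
  have hs : sinh t ≠ 0 := sinh_ne_zero.2 ht
  have hc : cosh t ≠ 0 := (cosh_pos t).ne'
  have h : (exp (4 * t) - 1) / 4 = exp (2 * t) * sinh t * cosh t := by
    rw [show 4 * t = 2 * (2 * t) by ring, exp_two_mul_eq_sq (2 * t), cosh_two_mul, sinh_two_mul,
      exp_two_mul_eq_sq]
    linear_combination (cosh t ^ 2 - sinh t ^ 2 + 1) / 4 * cosh_sq_sub_sinh_sq t
  rw [h, log_mul (by positivity) hc, log_mul (exp_ne_zero _) hs, log_exp]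

lemma f_eq_mul_g (n : ℕ) (m : ℝ) : f n m = n * g (m / (4 * n)) := by
  rcases eq_or_ne (n : ℝ) 0 with hn | hn
  · simp [f, hn]
  set t := m / (4 * n) with htdef
  have h4 : m / n = 4 * t := by rw [htdef]; field_simp
  have h2 : m / (2 * n) = 2 * t := by rw [htdef]; field_simp; ring
  rcases eq_or_ne t 0 with ht | ht
  · rw [f, h4, h2, ← htdef, ht]
    simp [g_zero]
  have hs : sinh t ≠ 0 := sinh_ne_zero.2 ht
  have hc : cosh t ≠ 0 := (cosh_pos t).ne'
  rw [f, h4, h2, log_exp_four_mul_sub_one_div_four ht, log_div hc hs, g, exp_two_mul_eq_sq,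
    ← cosh_add_sinh]
  linear_combination -(n / 2 * (log (sinh t) + log (cosh t))) * cosh_sq_sub_sinh_sq t

/-- **Monotonicity of `f_n` in `n`**: for every real `m > 0` and every positive
integer `n`, `f n m ≤ f (n+1) m`. -/
theorem f_mono_in_n (n : ℕ) (hn : 0 < n) (m : ℝ) (hm : 0 < m) :
    f n m ≤ f (n + 1) m := by
  have hn' : (0 : ℝ) < n := Nat.cast_pos.2 hn
  have hab : m / (4 * (n + 1)) ≤ m / (4 * n) := by gcongr; linarith
  have key := g_div_le_g_div_of_le (by positivity) hab
  rw [f_eq_mul_g, f_eq_mul_g]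
  push_cast
  calc (n : ℝ) * g (m / (4 * n)) = m / 4 * (g (m / (4 * n)) / (m / (4 * n))) := by
        field_simp
    _ ≤ m / 4 * (g (m / (4 * (n + 1))) / (m / (4 * (n + 1)))) := by gcongr
    _ = (n + 1) * g (m / (4 * (n + 1))) := by field_simp
end

section
/- Vanishing of f_n at the origin: For every positive integer n, f_n(m) tends to 0 as m tends to 0 from the right: lim_{m→0⁺} f_n(m) = 0. -/
/-! With `t = m / 4n` one has `(e^{m/n} - 1)/4 = e^{2t} sinh t cosh t` and
`1 - e^{2t} = -2 e^t sinh t`, so that for `t > 0`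
`2 f_n(m) / n = 2t - 2 e^t (sinh t · log sinh t) + (1 + e^{2t}) log cosh t`.
The right-hand side is continuous in `t` (as `s log s` is) and vanishes at `t = 0`. -/

open Real Filter Topology

noncomputable def fRescaled (t : ℝ) : ℝ :=
  log ((exp (4 * t) - 1) / 4) + exp (2 * t) * log (cosh t / sinh t)

lemma f_eq_fRescaled (n : ℕ) (m : ℝ) : f n m = (n : ℝ) / 2 * fRescaled (m / (4 * n)) := by
  have h4 : 4 * (m / (4 * n)) = m / n := by ring
  have h2 : 2 * (m / (4 * n)) = m / (2 * n) := by ring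
  rw [fRescaled, h4, h2, f]

lemma exp_four_mul_sub_one_div_four (t : ℝ) :
    (exp (4 * t) - 1) / 4 = exp (2 * t) * (sinh t * cosh t) := by
  have h4 : exp (4 * t) = exp t ^ 4 := by rw [← exp_nat_mul]; norm_num
  have h2 : exp (2 * t) = exp t ^ 2 := by rw [← exp_nat_mul]; norm_num
  rw [h4, h2, sinh_eq, cosh_eq, exp_neg]
  field_simp
  ring

lemma one_sub_exp_two_mul (t : ℝ) : 1 - exp (2 * t) = -2 * exp t * sinh t := by
  have h2 : exp (2 * t) = exp t ^ 2 := by rw [← exp_nat_mul]; norm_num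
  rw [h2, sinh_eq, exp_neg]
  field_simp
  ring

lemma fRescaled_eq {t : ℝ} (ht : 0 < t) :
    fRescaled t = 2 * t - 2 * exp t * (sinh t * log (sinh t))
      + (1 + exp (2 * t)) * log (cosh t) := by
  have hs : sinh t ≠ 0 := (sinh_pos_iff.mpr ht).ne'
  have hc : cosh t ≠ 0 := (cosh_pos t).ne'
  rw [fRescaled, exp_four_mul_sub_one_div_four, log_mul (exp_ne_zero _) (mul_ne_zero hs hc),
    log_exp, log_mul hs hc, log_div hc hs]
  linear_combination log (sinh t) * one_sub_exp_two_mul t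

lemma tendsto_fRescaled_nhdsGT_zero : Tendsto fRescaled (𝓝[>] 0) (𝓝 0) := by
  set g : ℝ → ℝ := fun t ↦ 2 * t - 2 * exp t * (sinh t * log (sinh t))
      + (1 + exp (2 * t)) * log (cosh t)
  have hg : Continuous g := by
    have hlog_cosh : Continuous fun t ↦ log (cosh t) :=
      continuous_cosh.log fun t ↦ (cosh_pos t).ne'
    have hmul_log : Continuous fun t ↦ sinh t * log (sinh t) :=
      continuous_mul_log.comp continuous_sinh
    fun_prop
  have hg0 : g 0 = 0 := by simp [g]
  have hlim : Tendsto g (𝓝[>] 0) (𝓝 0) := by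
    simpa only [hg0] using (hg.tendsto 0).mono_left (nhdsWithin_le_nhds (s := Set.Ioi 0))
  refine hlim.congr' ?_
  filter_upwards [self_mem_nhdsWithin] with t ht
  exact (fRescaled_eq ht).symm

lemma tendsto_div_const_nhdsGT_zero {c : ℝ} (hc : 0 < c) :
    Tendsto (fun m : ℝ ↦ m / c) (𝓝[>] 0) (𝓝[>] 0) :=
  tendsto_nhdsWithin_of_tendsto_nhds_of_eventually_within _
    (by simpa using ((continuous_id.div_const c).tendsto 0).mono_left nhdsWithin_le_nhds)
    (eventually_nhdsWithin_of_forall fun _ hm ↦ div_pos hm hc)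

theorem f_tendsto_zero_general (n : ℕ) :
    Filter.Tendsto (f n) (nhdsWithin 0 (Set.Ioi 0)) (nhds 0) := by
  rcases n.eq_zero_or_pos with rfl | hn
  · have hf0 : f 0 = fun _ ↦ 0 := funext fun m ↦ by simp [f]
    exact hf0 ▸ tendsto_const_nhds
  have hscale := tendsto_div_const_nhdsGT_zero (c := 4 * n) (by positivity)
  simpa [funext (f_eq_fRescaled n)] using
    (tendsto_fRescaled_nhdsGT_zero.comp hscale).const_mul ((n : ℝ) / 2)

/-- **Vanishing of `f_n` at the origin**: `f n m → 0` as `m → 0⁺`. -/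
theorem f_tendsto_zero (n : ℕ) (hn : 0 < n) :
    Filter.Tendsto (f n) (nhdsWithin 0 (Set.Ioi 0)) (nhds 0) :=
  f_tendsto_zero_general n
end

section
/- Subadditivity chain for f_n: For every positive integer n and all real x, y > 0, f_n(x) + f_n(y) ≥ f_n(x + y) ≥ [f_n(2x) + f_n(2y)]/2. -/
/-!
Substituting `t = m / (4n)` gives `f n m = n / 2 * φ t` with
`φ t = log ((e^{4t} - 1) / 4) + e^{2t} log (coth t)` (`fProfile`). Since
`e^{4t} - 1 = 4 e^{2t} sinh t cosh t`, the derivative collapses to `φ' t = 2 e^{2t} log (coth t)`,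
and `φ'' ≤ 0` amounts to `log (coth t) ≤ 1 / sinh (2t)`, which is `log u ≤ sinh (log u)` at
`u = coth t`. So `f n` is concave on `[0, ∞)` with `f n 0 = 0`: this gives subadditivity, and
midpoint concavity gives the second inequality.
-/

open Real Set

namespace Real

theorem log_le_sub_inv_div_two {u : ℝ} (hu : 1 ≤ u) : log u ≤ (u - u⁻¹) / 2 := by
  rw [← sinh_log (by positivity)]
  exact self_le_sinh_iff.2 (log_nonneg hu)

theorem log_coth_le {t : ℝ} (ht : 0 < t) :
    log (cosh t / sinh t) ≤ (2 * sinh t * cosh t)⁻¹ := by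
  have hs : 0 < sinh t := sinh_pos_iff.2 ht
  have hc : 0 < cosh t := cosh_pos t
  calc log (cosh t / sinh t)
      ≤ (cosh t / sinh t - (cosh t / sinh t)⁻¹) / 2 :=
        log_le_sub_inv_div_two ((one_le_div hs).2 (sinh_lt_cosh t).le)
    _ = (2 * sinh t * cosh t)⁻¹ := by
        field_simp
        linear_combination cosh_sq_sub_sinh_sq t

theorem hasDerivAt_log_coth {t : ℝ} (ht : 0 < t) :
    HasDerivAt (fun t => log (cosh t / sinh t)) (-(sinh t * cosh t)⁻¹) t := by
  have hs : sinh t ≠ 0 := (sinh_pos_iff.2 ht).ne'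
  have hc : cosh t ≠ 0 := (cosh_pos t).ne'
  refine (((hasDerivAt_cosh t).div (hasDerivAt_sinh t) hs).log (div_ne_zero hc hs)).congr_deriv ?_
  simp only [Pi.div_apply]
  field_simp
  linear_combination (-1) * cosh_sq_sub_sinh_sq t

theorem exp_four_mul_sub_one (t : ℝ) :
    exp (4 * t) - 1 = 4 * exp (2 * t) * sinh t * cosh t := by
  have h4 : exp (4 * t) = (cosh t + sinh t) ^ 4 := by
    rw [cosh_add_sinh, ← exp_nat_mul]; norm_num
  have h2 : exp (2 * t) = (cosh t + sinh t) ^ 2 := by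
    rw [cosh_add_sinh, ← exp_nat_mul]; norm_num
  rw [h4, h2]
  linear_combination (cosh t ^ 2 - sinh t ^ 2 + 1) * cosh_sq_sub_sinh_sq t

end Real

theorem ConcaveOn.map_add_le_add {g : ℝ → ℝ} (hg : ConcaveOn ℝ (Ici 0) g) (hg0 : 0 ≤ g 0)
    {x y : ℝ} (hx : 0 ≤ x) (hy : 0 ≤ y) : g (x + y) ≤ g x + g y := by
  rcases (add_nonneg hx hy).eq_or_lt with hxy | hxy
  · obtain ⟨rfl, rfl⟩ : x = 0 ∧ y = 0 := ⟨by linarith, by linarith⟩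
    simpa using hg0
  have scaled : ∀ z, 0 ≤ z → z ≤ x + y → z / (x + y) * g (x + y) ≤ g z := by
    intro z hz₀ hz
    have hθ : z / (x + y) ≤ 1 := (div_le_one hxy).2 hz
    have := hg.2 self_mem_Ici (mem_Ici.2 hxy.le) (sub_nonneg.2 hθ) (by positivity)
      (sub_add_cancel 1 _)
    simp only [smul_eq_mul, mul_zero, zero_add, div_mul_cancel₀ z hxy.ne'] at this
    linarith [mul_nonneg (sub_nonneg.2 hθ) hg0]
  calc g (x + y) = x / (x + y) * g (x + y) + y / (x + y) * g (x + y) := by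
        rw [← add_mul, ← add_div, div_self hxy.ne', one_mul]
    _ ≤ g x + g y := add_le_add (scaled x hx (by linarith)) (scaled y hy (by linarith))

noncomputable def fProfile (t : ℝ) : ℝ :=
  log ((exp (4 * t) - 1) / 4) + exp (2 * t) * log (cosh t / sinh t)

theorem f_eq_fProfile (n : ℕ) (m : ℝ) : f n m = n / 2 * fProfile (m / (4 * n)) := by
  have h4 : 4 * (m / (4 * n)) = m / n := by
    rw [← mul_div_assoc, mul_div_mul_left _ _ four_ne_zero]
  have h2 : 2 * (m / (4 * n)) = m / (2 * n) := by
    rw [← mul_div_assoc, show (4 : ℝ) * n = 2 * (2 * n) by ring,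
      mul_div_mul_left _ _ two_ne_zero]
  rw [f, fProfile, h4, h2]

noncomputable def fProfile' (t : ℝ) : ℝ :=
  2 * exp (2 * t) * log (cosh t / sinh t)

theorem hasDerivAt_fProfile {t : ℝ} (ht : 0 < t) : HasDerivAt fProfile (fProfile' t) t := by
  have hs : 0 < sinh t := sinh_pos_iff.2 ht
  have hc : 0 < cosh t := cosh_pos t
  have hlog := ((((hasDerivAt_id' t).const_mul 4).exp.sub_const 1).div_const 4).log
    (by rw [exp_four_mul_sub_one]; positivity)
  have hprod := ((hasDerivAt_id' t).const_mul 2).exp.mul (hasDerivAt_log_coth ht)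
  refine (hlog.add hprod).congr_deriv ?_
  rw [fProfile', exp_four_mul_sub_one, show 4 * t = 2 * t + 2 * t by ring, exp_add]
  field_simp
  ring

theorem hasDerivAt_fProfile' {t : ℝ} (ht : 0 < t) :
    HasDerivAt fProfile'
      (4 * exp (2 * t) * (log (cosh t / sinh t) - (2 * sinh t * cosh t)⁻¹)) t := by
  have hs : 0 < sinh t := sinh_pos_iff.2 ht
  have hc : 0 < cosh t := cosh_pos t
  have hexp := ((hasDerivAt_id' t).const_mul 2).exp.const_mul 2
  refine (hexp.mul (hasDerivAt_log_coth ht)).congr_deriv ?_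
  field_simp
  ring

-- This form makes continuity at `0` visible, as `x log x → 0`.
theorem fProfile_eqOn : EqOn fProfile
    (fun t => 2 * t + (1 + exp (2 * t)) * log (cosh t) - 2 * exp t * (sinh t * log (sinh t)))
    (Ici 0) := by
  intro t ht
  rcases (mem_Ici.1 ht).eq_or_lt with rfl | ht
  · simp [fProfile]
  have hs : 0 < sinh t := sinh_pos_iff.2 ht
  have hc : 0 < cosh t := cosh_pos t
  have h2 : exp (2 * t) = 2 * exp t * sinh t + 1 := by
    rw [show 2 * t = t + t by ring, exp_add, ← cosh_add_sinh]
    linear_combination cosh_sq_sub_sinh_sq t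
  simp only [fProfile]
  rw [exp_four_mul_sub_one, mul_assoc 4, mul_assoc 4, mul_div_cancel_left₀ _ four_ne_zero,
    ← mul_assoc, log_mul (by positivity) hc.ne', log_mul (exp_pos _).ne' hs.ne', log_exp,
    log_div hc.ne' hs.ne', h2]
  ring

theorem continuousOn_fProfile : ContinuousOn fProfile (Ici 0) := by
  refine ContinuousOn.congr (Continuous.continuousOn ?_) fProfile_eqOn
  have := continuous_cosh.log fun t => (cosh_pos t).ne'
  have := continuous_sinh.mul_log
  fun_prop

theorem concaveOn_fProfile : ConcaveOn ℝ (Ici 0) fProfile := by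
  refine concaveOn_of_hasDerivWithinAt2_nonpos (convex_Ici 0) continuousOn_fProfile
    (f' := fProfile')
    (f'' := fun t => 4 * exp (2 * t) * (log (cosh t / sinh t) - (2 * sinh t * cosh t)⁻¹))
    (fun t ht => ?_) (fun t ht => ?_) (fun t ht => ?_)
  all_goals rw [interior_Ici] at ht
  · exact (hasDerivAt_fProfile ht).hasDerivWithinAt
  · exact (hasDerivAt_fProfile' ht).hasDerivWithinAt
  · exact mul_nonpos_of_nonneg_of_nonpos (by positivity) (sub_nonpos.2 (log_coth_le ht))

theorem concaveOn_f (n : ℕ) : ConcaveOn ℝ (Ici 0) (f n) := by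
  have h := (concaveOn_fProfile.comp_linearMap (LinearMap.mul ℝ ℝ (4 * (n : ℝ))⁻¹)).smul
    (c := (n : ℝ) / 2) (by positivity)
  refine (h.subset (fun m hm => ?_) (convex_Ici 0)).congr fun m _ => ?_
  · simp only [mem_preimage, LinearMap.mul_apply', mem_Ici] at hm ⊢
    positivity
  · simp [f_eq_fProfile, div_eq_inv_mul]

theorem f_zero (n : ℕ) : f n 0 = 0 := by
  simp [f]

theorem f_subadditivity_chain_general (n : ℕ) (x y : ℝ) (hx : 0 < x) (hy : 0 < y) :
    f n x + f n y ≥ f n (x + y) ∧ f n (x + y) ≥ (f n (2 * x) + f n (2 * y)) / 2 := by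
  have hf := concaveOn_f n
  refine ⟨hf.map_add_le_add (f_zero n).ge hx.le hy.le, ?_⟩
  calc (f n (2 * x) + f n (2 * y)) / 2
        = (1 / 2 : ℝ) • f n (2 * x) + (1 / 2 : ℝ) • f n (2 * y) := by
          simp only [smul_eq_mul]; ring
    _ ≤ f n ((1 / 2 : ℝ) • (2 * x) + (1 / 2 : ℝ) • (2 * y)) :=
        hf.2 (by simp only [mem_Ici]; positivity) (by simp only [mem_Ici]; positivity)
          (by norm_num) (by norm_num) (by norm_num)
    _ = f n (x + y) := by simp only [smul_eq_mul]; ring_nf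

/-- **Subadditivity chain for `f_n`**: for all `x, y > 0`,
`f n x + f n y ≥ f n (x+y) ≥ (f n (2x) + f n (2y)) / 2`. -/
theorem f_subadditivity_chain (n : ℕ) (hn : 0 < n) (x y : ℝ) (hx : 0 < x) (hy : 0 < y) :
    f n x + f n y ≥ f n (x + y) ∧ f n (x + y) ≥ (f n (2 * x) + f n (2 * y)) / 2 :=
  f_subadditivity_chain_general n x y hx hy
end
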